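/- Let (W, S) be a Coxeter system and w ∈ W. The set L(w) of simple reflections s with s ≤_Pre w (i.e., ℓ(sw) < ℓ(w)) satisfies: if T ⊆ L(w), then the subgroup W_T generated by T is finite and its longest element Δ_T satisfies Δ_T ≤_Pre w. -/

import Mathlib

/-!
STATEMENT 5.  Let `(W, S)` be a Coxeter system and `w ∈ W`.  Let
`L(w) = { i | ℓ(sᵢ w) < ℓ(w) }` be the set of simple left-prefixes of `w`.
If `T ⊆ L(w)`, then the standard parabolic subgroup `W_T` generated by the
simple reflections indexed by `T` is finite, and it has a longest element
`Δ_T` which satisfies `Δ_T ≤_Pre w` in the prefix (left weak) order.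
-/

/-- The prefix (left weak) order on a Coxeter group:
`u ≤_Pre v` iff `ℓ(u) + ℓ(u⁻¹ v) = ℓ(v)`. -/
def CoxeterSystem.lePre {B : Type*} {W : Type*} [Group W] {M : CoxeterMatrix B}
    (cs : CoxeterSystem M W) (u v : W) : Prop :=
  cs.length u + cs.length (u⁻¹ * v) = cs.length v

/-!
Tits' sign representation of `W` on `W × ℤˣ`, in which `sᵢ` sends `(r, e)` to `(sᵢ r sᵢ, ±e)`
with the sign flipping exactly when `sᵢ r sᵢ = sᵢ`, shows that a left inversion `t` of `π ω`
occurs in the left inversion sequence of `ω`, for every word `ω`: the strong exchange property.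

Suppose every `i ∈ T` is a left descent of `w`, and let `u ≤_Pre w` with `ℓ(sᵢ u) > ℓ(u)`.
Exchanging `sᵢ` into a reduced word of `w` through `u` cannot delete a letter of `u`, so it
shortens `u⁻¹ w`, and hence `sᵢ u ≤_Pre w`. Along reduced `T`-words, every element of `W_T` is a
prefix of `w`. The prefixes of `w = π ω` are subwords of `ω` (peel off right descents of `u⁻¹ w`
by exchange), so `W_T` is finite, and an element of `W_T` of maximal length is a prefix of `w`.
-/

namespace CoxeterSystem

open Classical in
noncomputable def eqSign {α : Type*} (a b : α) : ℤˣ := if a = b then -1 else 1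

theorem eqSign_conj {G : Type*} [Group G] (g a b : G) :
    eqSign (g * a * g⁻¹) (g * b * g⁻¹) = eqSign a b := by
  unfold eqSign
  congr 1
  simp

variable {B W : Type*} [Group W] {M : CoxeterMatrix B} (cs : CoxeterSystem M W)

local prefix:100 "s " => cs.simple
local prefix:100 "π " => cs.wordProd
local prefix:100 "ℓ " => cs.length
local prefix:100 "lis " => cs.leftInvSeq

theorem prod_map_alternatingWord_two_mul {G : Type*} [Monoid G] (f : B → G) (i j : B) (m : ℕ) :
    ((alternatingWord i j (2 * m)).map f).prod = (f i * f j) ^ m := by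
  induction m with
  | zero => simp [alternatingWord]
  | succ m ih =>
    rw [Nat.mul_succ, alternatingWord_succ', alternatingWord_succ']
    simp [ih, pow_succ', mul_assoc]

noncomputable def wordSign (ω : List B) (t : W) : ℤˣ :=
  ((lis ω).map (eqSign · t)).prod

theorem wordSign_cons (i : B) (ω : List B) (t : W) :
    cs.wordSign (i :: ω) t = eqSign (s i) t * cs.wordSign ω (s i * t * s i) := by
  simp only [wordSign, leftInvSeq, List.map_cons, List.prod_cons, List.map_map]
  congr 2
  refine List.map_congr_left fun x _ => ?_
  simpa [MulAut.conj_apply, mul_assoc] using eqSign_conj (s i) x (s i * t * s i)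

theorem wordSign_eq_one_of_notMem {ω : List B} {t : W} (h : t ∉ lis ω) :
    cs.wordSign ω t = 1 :=
  List.prod_eq_one <| by
    simp only [List.mem_map, forall_exists_index, and_imp, forall_apply_eq_imp_iff₂]
    exact fun x hx => if_neg (by rintro rfl; exact h hx)

theorem leftInvSeq_alternatingWord_eq_append (i j : B) :
    ∃ l : List W, lis (alternatingWord i j (2 * M i j)) = l ++ l := by
  have hp : (s j * s i) ^ M i j = 1 := by rw [M.symmetric]; exact cs.simple_mul_simple_pow j i
  set p := M i j
  set L := lis (alternatingWord i j (2 * p))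
  have hL : L.length = 2 * p := by simp [L]
  refine ⟨L.take p, ?_⟩
  conv_lhs => rw [← List.take_append_drop p L]
  congr 1
  refine List.ext_getElem (by simp [hL]; omega) fun k _ h₂ => ?_
  simp only [List.length_take, hL] at h₂
  rw [List.getElem_drop, List.getElem_take,
    getElem_leftInvSeq_alternatingWord cs i j p _ (by omega),
    getElem_leftInvSeq_alternatingWord cs i j p _ (by omega),
    prod_alternatingWord_eq_mul_pow, prod_alternatingWord_eq_mul_pow, if_neg (by simp),
    if_neg (by simp), (by omega : (2 * (p + k) + 1) / 2 = p + k),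
    (by omega : (2 * k + 1) / 2 = k), pow_add, hp, one_mul]

theorem wordSign_alternatingWord (i j : B) (t : W) :
    cs.wordSign (alternatingWord i j (2 * M i j)) t = 1 := by
  obtain ⟨l, hl⟩ := cs.leftInvSeq_alternatingWord_eq_append i j
  rw [wordSign, hl, List.map_append, List.prod_append, Int.units_mul_self]

noncomputable def simplePerm (i : B) : Equiv.Perm (W × ℤˣ) :=
  Function.Involutive.toPerm (fun p => (s i * p.1 * s i, eqSign (s i) (s i * p.1 * s i) * p.2))
    (by
      rintro ⟨r, e⟩
      have h := eqSign_conj (s i) (s i) r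
      rw [inv_simple, simple_mul_simple_self, one_mul] at h
      have hr : s i * (s i * r * s i) * s i = r := by simp [mul_assoc]
      refine Prod.ext (by simp [mul_assoc]) ?_
      show eqSign (s i) (s i * (s i * r * s i) * s i) * (eqSign (s i) (s i * r * s i) * e) = e
      rw [hr, h, ← mul_assoc, Int.units_mul_self, one_mul])

theorem prod_map_simplePerm_apply (ω : List B) (r : W) (e : ℤˣ) :
    (ω.map cs.simplePerm).prod (r, e) =
      (π ω * r * (π ω)⁻¹, cs.wordSign ω (π ω * r * (π ω)⁻¹) * e) := by
  induction ω with
  | nil => simp [wordSign]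
  | cons i ω ih =>
    have h : π (i :: ω) * r * (π (i :: ω))⁻¹ = s i * (π ω * r * (π ω)⁻¹) * s i := by
      simp [wordProd_cons, mul_assoc]
    rw [List.map_cons, List.prod_cons, Equiv.Perm.mul_apply, ih, h, wordSign_cons]
    simp [simplePerm, mul_assoc]

theorem isLiftable_simplePerm : M.IsLiftable cs.simplePerm := by
  intro i j
  have hπ : π (alternatingWord i j (2 * M i j)) = 1 := by
    rw [wordProd, prod_map_alternatingWord_two_mul, simple_mul_simple_pow]
  rw [← prod_map_alternatingWord_two_mul]
  ext ⟨r, e⟩ : 1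
  simp [prod_map_simplePerm_apply, hπ, wordSign_alternatingWord]

noncomputable def signRep : W →* Equiv.Perm (W × ℤˣ) :=
  cs.lift ⟨cs.simplePerm, cs.isLiftable_simplePerm⟩

theorem signRep_wordProd (ω : List B) : cs.signRep (π ω) = (ω.map cs.simplePerm).prod := by
  rw [signRep, wordProd, map_list_prod, List.map_map]
  congr 2
  funext i
  exact cs.lift_apply_simple cs.isLiftable_simplePerm i

-- Equal to `-1` exactly when `t` is a left inversion of `w`.
noncomputable def inversionSign (w t : W) : ℤˣ := (cs.signRep w (w⁻¹ * t * w, 1)).2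

theorem inversionSign_wordProd (ω : List B) (t : W) :
    cs.inversionSign (π ω) t = cs.wordSign ω t := by
  simp [inversionSign, signRep_wordProd, prod_map_simplePerm_apply, mul_assoc]

theorem signRep_apply (w r : W) (e : ℤˣ) :
    cs.signRep w (r, e) = (w * r * w⁻¹, cs.inversionSign w (w * r * w⁻¹) * e) := by
  obtain ⟨ω, rfl⟩ := cs.wordProd_surjective w
  rw [signRep_wordProd, prod_map_simplePerm_apply, inversionSign_wordProd]

theorem inversionSign_mul (v w t : W) :
    cs.inversionSign (v * w) t = cs.inversionSign v t * cs.inversionSign w (v⁻¹ * t * v) := by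
  have h := congrArg Prod.snd
    (congrArg (· ((v * w)⁻¹ * t * (v * w), 1)) (map_mul cs.signRep v w))
  simp only [Equiv.Perm.mul_apply, signRep_apply] at h
  have e₁ : v * w * ((v * w)⁻¹ * t * (v * w)) * (v * w)⁻¹ = t := by group
  have e₂ : w * ((v * w)⁻¹ * t * (v * w)) * w⁻¹ = v⁻¹ * t * v := by group
  have e₃ : v * (v⁻¹ * t * v) * v⁻¹ = t := by group
  rw [e₁, e₂, e₃, mul_one, mul_one] at h
  exact h

theorem inversionSign_one (t : W) : cs.inversionSign 1 t = 1 := by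
  simp [inversionSign]

theorem inversionSign_simple_self (i : B) : cs.inversionSign (s i) (s i) = -1 := by
  rw [← wordProd_singleton, inversionSign_wordProd]
  simp [wordSign, leftInvSeq, eqSign]

theorem inversionSign_self {t : W} (ht : cs.IsReflection t) : cs.inversionSign t t = -1 := by
  obtain ⟨v, i, rfl⟩ := ht
  have hv : v⁻¹ * (v * s i * v⁻¹) * v = s i := by group
  have hvs : (v * s i)⁻¹ * (v * s i * v⁻¹) * (v * s i) = s i := by group
  have hcancel := cs.inversionSign_mul v v⁻¹ (v * s i * v⁻¹)
  rw [mul_inv_cancel, inversionSign_one, hv] at hcancel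
  rw [cs.inversionSign_mul (v * s i), cs.inversionSign_mul, hv, hvs, inversionSign_simple_self,
    mul_neg_one, neg_mul, ← hcancel]

theorem inversionSign_eq_neg_one {w t : W} (ht : cs.IsLeftInversion w t) :
    cs.inversionSign w t = -1 := by
  obtain ⟨ψ, hψ, hπψ⟩ := cs.exists_isReduced (t * w)
  have hnotMem : t ∉ lis ψ := fun hmem => by
    have := (cs.isLeftInversion_of_mem_leftInvSeq hψ hmem).2
    rw [← hπψ, ← mul_assoc, ht.1.mul_self, one_mul] at this
    exact ht.2.not_gt this
  have hsign : cs.inversionSign (t * w) t = 1 := by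
    rw [hπψ, inversionSign_wordProd, wordSign_eq_one_of_notMem cs hnotMem]
  calc cs.inversionSign w t = cs.inversionSign (t * (t * w)) t := by
        rw [← mul_assoc, ht.1.mul_self, one_mul]
    _ = -1 := by
        rw [inversionSign_mul, inversionSign_self cs ht.1, ht.1.inv, ht.1.mul_self, one_mul,
          hsign, mul_one]

theorem mem_leftInvSeq_of_isLeftInversion {ω : List B} {t : W}
    (ht : cs.IsLeftInversion (π ω) t) : t ∈ lis ω := by
  by_contra hnotMem
  have h := cs.wordSign_eq_one_of_notMem hnotMem
  rw [← inversionSign_wordProd, inversionSign_eq_neg_one cs ht] at h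
  exact absurd h (by decide)

theorem exists_mul_wordProd_eq_wordProd_eraseIdx {ω : List B} {t : W}
    (ht : cs.IsLeftInversion (π ω) t) : ∃ k < ω.length, t * π ω = π (ω.eraseIdx k) := by
  obtain ⟨k, hk, rfl⟩ := List.getElem_of_mem (cs.mem_leftInvSeq_of_isLeftInversion ht)
  refine ⟨k, by simpa using hk, ?_⟩
  rw [← getD_leftInvSeq_mul_wordProd, List.getD_eq_getElem]

theorem exists_wordProd_mul_eq_wordProd_eraseIdx {ω : List B} {t : W}
    (ht : cs.IsRightInversion (π ω) t) : ∃ k < ω.length, π ω * t = π (ω.eraseIdx k) := by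
  have hconj : π ω * t * (π ω)⁻¹ * π ω = π ω * t := by group
  have hleft : cs.IsLeftInversion (π ω) (π ω * t * (π ω)⁻¹) :=
    ⟨ht.1.conj _, by rw [hconj]; exact ht.2⟩
  simpa only [hconj] using cs.exists_mul_wordProd_eq_wordProd_eraseIdx hleft

theorem exists_isReduced_sublist (ω : List B) :
    ∃ ψ, ψ.Sublist ω ∧ cs.IsReduced ψ ∧ π ψ = π ω := by
  induction ω with
  | nil => exact ⟨[], .slnil, by simp [IsReduced], rfl⟩
  | cons i ω ih =>
    obtain ⟨ψ, hsub, hψ, hπ⟩ := ih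
    rcases cs.length_simple_mul (π ψ) i with hlen | hlen
    · refine ⟨i :: ψ, hsub.cons_cons i, ?_, by rw [wordProd_cons, wordProd_cons, hπ]⟩
      rw [IsReduced, wordProd_cons, hlen, hψ, List.length_cons]
    · obtain ⟨k, hk, hπk⟩ :=
        cs.exists_mul_wordProd_eq_wordProd_eraseIdx (ω := ψ) ⟨cs.isReflection_simple i, by omega⟩
      refine ⟨ψ.eraseIdx k, ((List.eraseIdx_sublist ψ k).trans hsub).cons i, ?_,
        by rw [← hπk, hπ, wordProd_cons]⟩
      rw [IsReduced, ← hπk, List.length_eraseIdx_of_lt hk]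
      rw [IsReduced] at hψ
      omega

theorem exists_isReduced_of_mem_closure {T : Set B} {u : W}
    (hu : u ∈ Subgroup.closure (cs.simple '' T)) :
    ∃ ω, cs.IsReduced ω ∧ (∀ i ∈ ω, i ∈ T) ∧ π ω = u := by
  have hword : ∃ ω : List B, (∀ i ∈ ω, i ∈ T) ∧ π ω = u := by
    induction hu using Subgroup.closure_induction_left with
    | one => exact ⟨[], by simp, rfl⟩
    | mul_left _ hx _ _ ih | inv_mul_cancel _ hx _ _ ih =>
      obtain ⟨i, hi, rfl⟩ := hx
      obtain ⟨ω, hω, rfl⟩ := ih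
      exact ⟨i :: ω, by simpa [hi] using hω, by simp [wordProd_cons]⟩
  obtain ⟨ω, hω, rfl⟩ := hword
  obtain ⟨ψ, hsub, hψ, hπ⟩ := cs.exists_isReduced_sublist ω
  exact ⟨ψ, hψ, fun i hi => hω i (hsub.subset hi), hπ⟩

theorem length_inv_mul_simple_mul_lt {u w : W} {i : B} (hw : cs.IsLeftDescent w i)
    (hu : ¬cs.IsLeftDescent u i) : ℓ (u⁻¹ * s i * w) < ℓ (u⁻¹ * w) := by
  obtain ⟨ψ, hψ, rfl⟩ := cs.exists_isReduced u
  obtain ⟨ξ, hξ, hπξ⟩ := cs.exists_isReduced ((π ψ)⁻¹ * w)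
  have hw' : w = π (ψ ++ ξ) := by rw [wordProd_append, ← hπξ, mul_inv_cancel_left]
  rw [hw', ← isLeftInversion_simple_iff_isLeftDescent] at hw
  obtain ⟨k, hk, hπk⟩ := cs.exists_mul_wordProd_eq_wordProd_eraseIdx hw
  rw [← hw'] at hπk
  rw [not_isLeftDescent_iff] at hu
  rw [IsReduced] at hψ hξ
  by_cases hkψ : k < ψ.length
  · rw [List.eraseIdx_append_of_lt_length hkψ, wordProd_append, hw', wordProd_append,
      ← mul_assoc] at hπk
    have hle := cs.length_wordProd_le (ψ.eraseIdx k)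
    rw [← mul_right_cancel hπk, List.length_eraseIdx_of_lt hkψ] at hle
    omega
  · push Not at hkψ
    rw [List.eraseIdx_append_of_length_le hkψ, wordProd_append] at hπk
    have hk' : k - ψ.length < ξ.length := by rw [List.length_append] at hk; omega
    have hle := cs.length_wordProd_le (ξ.eraseIdx (k - ψ.length))
    rw [← inv_mul_cancel_left (π ψ) (π (ξ.eraseIdx _)), ← hπk, ← mul_assoc,
      List.length_eraseIdx_of_lt hk'] at hle
    rw [hπξ, hξ]
    omega

theorem lePre_wordProd_of_isLeftDescent {w : W} {ω : List B} (hω : cs.IsReduced ω)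
    (hdesc : ∀ i ∈ ω, cs.IsLeftDescent w i) : cs.lePre (π ω) w := by
  induction ω with
  | nil => simp [lePre]
  | cons i ω ih =>
    have hω' : cs.IsReduced ω := by simpa using hω.drop 1
    have hpre := ih hω' fun j hj => hdesc j (List.mem_cons_of_mem i hj)
    have hasc : ℓ (s i * π ω) = ℓ (π ω) + 1 := by
      rw [← wordProd_cons, hω, hω', List.length_cons]
    have hlt := cs.length_inv_mul_simple_mul_lt (hdesc i List.mem_cons_self)
      (cs.not_isLeftDescent_iff.mpr hasc)
    have hle := cs.length_mul_le (s i * π ω) ((s i * π ω)⁻¹ * w)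
    rw [mul_inv_cancel_left, mul_inv_rev, inv_simple] at hle
    unfold lePre at hpre ⊢
    rw [wordProd_cons, mul_inv_rev, inv_simple]
    omega

theorem lePre_of_mem_closure {w : W} {T : Set B} (hT : ∀ i ∈ T, cs.IsLeftDescent w i) {u : W}
    (hu : u ∈ Subgroup.closure (cs.simple '' T)) : cs.lePre u w := by
  obtain ⟨ω, hω, hωT, rfl⟩ := cs.exists_isReduced_of_mem_closure hu
  exact cs.lePre_wordProd_of_isLeftDescent hω fun i hi => hT i (hωT i hi)

theorem exists_sublist_of_lePre {u : W} {ω : List B} (h : cs.lePre u (π ω)) :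
    ∃ ψ, ψ.Sublist ω ∧ π ψ = u := by
  induction hn : ℓ (u⁻¹ * π ω) using Nat.strong_induction_on generalizing ω with
  | _ n ih =>
    by_cases hy : u⁻¹ * π ω = 1
    · exact ⟨ω, .refl ω, (inv_mul_eq_one.mp hy).symm⟩
    obtain ⟨j, hj⟩ := cs.exists_rightDescent_of_ne_one hy
    rw [isRightDescent_iff, mul_assoc] at hj
    have hle := cs.length_mul_le u (u⁻¹ * (π ω * s j))
    rw [mul_inv_cancel_left] at hle
    unfold lePre at h
    obtain ⟨k, -, hπk⟩ :=
      cs.exists_wordProd_mul_eq_wordProd_eraseIdx (ω := ω) ⟨cs.isReflection_simple j, by omega⟩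
    have hpre : cs.lePre u (π (ω.eraseIdx k)) := by
      unfold lePre
      rcases cs.length_mul_simple (π ω) j with hlen | hlen <;>
        · rw [← hπk]; omega
    obtain ⟨ψ, hψ, rfl⟩ := ih _ (by rw [← hπk]; omega) hpre rfl
    exact ⟨ψ, hψ.trans (List.eraseIdx_sublist ω k), rfl⟩

theorem finite_setOf_lePre (w : W) : {u | cs.lePre u w}.Finite := by
  obtain ⟨ω, rfl⟩ := cs.wordProd_surjective w
  refine (ω.sublists.finite_toSet.image cs.wordProd).subset fun u hu => ?_
  obtain ⟨ψ, hψ, rfl⟩ := cs.exists_sublist_of_lePre hu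
  exact ⟨ψ, List.mem_sublists.mpr hψ, rfl⟩

end CoxeterSystem

theorem parabolic_of_left_descents_finite_and_longest_le {B : Type*} {W : Type*}
    [Group W] {M : CoxeterMatrix B} (cs : CoxeterSystem M W)
    (w : W) (T : Set B) (hT : ∀ i ∈ T, cs.IsLeftDescent w i) :
    (Subgroup.closure (cs.simple '' T) : Set W).Finite ∧
    ∃ Δ ∈ Subgroup.closure (cs.simple '' T),
      (∀ u ∈ Subgroup.closure (cs.simple '' T), cs.length u ≤ cs.length Δ) ∧
      cs.lePre Δ w := by
  have hpre : ∀ u ∈ Subgroup.closure (cs.simple '' T), cs.lePre u w :=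
    fun _ hu => cs.lePre_of_mem_closure hT hu
  have hfin := (cs.finite_setOf_lePre w).subset hpre
  obtain ⟨Δ, hΔ, hmax⟩ := Set.exists_max_image _ cs.length hfin ⟨1, Subgroup.one_mem _⟩
  exact ⟨hfin, Δ, hΔ, hmax, hpre Δ hΔ⟩
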